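/- The flag descent polynomial F_n^α(x) = Σ x^{flag(w)}, summed over colored permutations w ∈ Z_α ≀ S_n with last color 0, is palindromic: x^{α(n−1)} · F_n^α(1/x) = F_n^α(x). -/

import Mathlib

open Finset Polynomial

/-- The `i`-th position (0-indexed) among the first `n-1` positions, as an element of `Fin n`. -/
def lo (n : ℕ) (i : Fin (n - 1)) : Fin n := ⟨i.val, by have := i.isLt; omega⟩

/-- The `(i+1)`-st position, as an element of `Fin n`. -/
def hi (n : ℕ) (i : Fin (n - 1)) : Fin n := ⟨i.val + 1, by have := i.isLt; omega⟩

/-- The colored descent number `d(w)` of a colored permutation, given by the underlying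
permutation `w` and the color vector `c`. -/
def cdes {n α : ℕ} (w : Equiv.Perm (Fin n)) (c : Fin n → ZMod α) : ℕ :=
  (univ.filter (fun i : Fin (n - 1) =>
    c (lo n i) ≠ c (hi n i) ∨ (c (lo n i) = c (hi n i) ∧ w (hi n i) < w (lo n i)))).card

/-- The flag descent statistic of a colored permutation. -/
def flagStat {n α : ℕ} (w : Equiv.Perm (Fin n)) (c : Fin n → ZMod α) : ℕ :=
  α * (univ.filter (fun i : Fin (n - 1) =>
        c (lo n i) = c (hi n i) ∧ w (hi n i) < w (lo n i))).card
  + α * (univ.filter (fun i : Fin (n - 1) =>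
        (c (lo n i)).val < (c (hi n i)).val)).card
  + (if h : 0 < n then (c ⟨0, h⟩).val else 0)

/-- The classical descent number of a permutation. -/
def des {n : ℕ} (w : Equiv.Perm (Fin n)) : ℕ :=
  (univ.filter (fun i : Fin (n - 1) => w (hi n i) < w (lo n i))).card

/-- The reversal of the underlying permutation (in one-line notation). -/
def rPerm {n : ℕ} (w : Equiv.Perm (Fin n)) : Equiv.Perm (Fin n) :=
  (Fin.revPerm : Equiv.Perm (Fin n)).trans w

/-- The reversed color vector with `c 0` subtracted from every color. -/
def rCol {n α : ℕ} (c : Fin n → ZMod α) : Fin n → ZMod α :=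
  fun i => c i.rev - (if h : 0 < n then c ⟨0, h⟩ else 0)

section AuxZMod
variable {α : ℕ} [NeZero α]

lemma val_sub_eq (a d : ZMod α) :
    (a - d).val = if d.val ≤ a.val then a.val - d.val else a.val + α - d.val := by
  have hα : 0 < α := NeZero.pos α
  have ha := a.val_lt
  have hd := d.val_lt
  have h1 : a - d = ((a.val + α - d.val : ℕ) : ZMod α) := by
    have h2 : ((a.val + α - d.val : ℕ) : ZMod α) + d = a := by
      have h3 : (a.val + α - d.val : ℕ) + d.val = a.val + α := by omega
      calc ((a.val + α - d.val : ℕ) : ZMod α) + d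
          = ((a.val + α - d.val : ℕ) : ZMod α) + (d.val : ℕ) := by
            simp [ZMod.natCast_val, ZMod.cast_id]
        _ = (((a.val + α - d.val : ℕ) + d.val : ℕ) : ZMod α) := by push_cast; ring
        _ = ((a.val + α : ℕ) : ZMod α) := by rw [h3]
        _ = a := by push_cast; simp [ZMod.natCast_val, ZMod.cast_id]
    exact (eq_sub_of_add_eq h2).symm
  rw [h1, ZMod.val_natCast]
  split_ifs with h
  · have h4 : a.val + α - d.val = (a.val - d.val) + α := by omega
    rw [h4, Nat.add_mod_right, Nat.mod_eq_of_lt (by omega)]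
  · rw [Nat.mod_eq_of_lt (by omega)]

lemma point (a b d : ZMod α) {k : ℕ} (u v : Fin k) (huv : u ≠ v) :
    ((if b - d = a - d ∧ u < v then α else 0) + (if (b - d).val < (a - d).val then α else 0))
    + ((if a = b ∧ v < u then α else 0) + (if a.val < b.val then α else 0))
    + α * (if b.val < d.val then 1 else 0)
    = α + α * (if a.val < d.val then 1 else 0) := by
  have ha := a.val_lt
  have hb := b.val_lt
  have hd := d.val_lt
  by_cases hab : a = b
  · subst hab
    rcases huv.lt_or_gt with h | h <;>
      simp [h, h.not_gt, lt_irrefl]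
  · have hab' : a.val ≠ b.val := fun h => hab (ZMod.val_injective α h)
    have hsub : ¬(b - d = a - d) := fun h => hab (sub_left_inj.mp h).symm
    simp only [hsub, false_and, if_false, hab, and_false]
    rw [val_sub_eq, val_sub_eq]
    split_ifs <;> omega

end AuxZMod

section Main
variable {m α : ℕ} [NeZero α]

lemma flagStat_eq (w : Equiv.Perm (Fin (m+1))) (c : Fin (m+1) → ZMod α) :
    flagStat w c =
      (∑ i : Fin m,
        ((if c (lo (m+1) i) = c (hi (m+1) i) ∧ w (hi (m+1) i) < w (lo (m+1) i) then α else 0)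
         + (if (c (lo (m+1) i)).val < (c (hi (m+1) i)).val then α else 0)))
      + (c ⟨0, Nat.succ_pos m⟩).val := by
  rw [flagStat, Finset.card_filter, Finset.card_filter, Finset.mul_sum, Finset.mul_sum,
    ← Finset.sum_add_distrib]
  simp [mul_ite]

lemma rev_lo_rev (i : Fin m) : (lo (m+1) (Fin.rev i)).rev = hi (m+1) i := by
  have := i.isLt
  ext
  simp [lo, hi, Fin.val_rev]
  omega

lemma rev_hi_rev (i : Fin m) : (hi (m+1) (Fin.rev i)).rev = lo (m+1) i := by
  have := i.isLt
  ext
  simp [lo, hi, Fin.val_rev]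
  omega

lemma rCol_apply (c : Fin (m+1) → ZMod α) (k : Fin (m+1)) :
    rCol c k = c k.rev - c ⟨0, Nat.succ_pos m⟩ := by
  simp [rCol]

lemma rPerm_apply (w : Equiv.Perm (Fin (m+1))) (k : Fin (m+1)) :
    rPerm w k = w k.rev := rfl

lemma rPerm_rPerm (w : Equiv.Perm (Fin (m+1))) : rPerm (rPerm w) = w := by
  ext k
  simp [rPerm_apply, Fin.rev_rev]

lemma rev_zero_eq : (⟨0, Nat.succ_pos m⟩ : Fin (m+1)).rev = ⟨m, Nat.lt_succ_self m⟩ := by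
  ext; simp [Fin.val_rev]

lemma rev_last_eq : (⟨m, Nat.lt_succ_self m⟩ : Fin (m+1)).rev = ⟨0, Nat.succ_pos m⟩ := by
  ext; simp [Fin.val_rev]

lemma rCol_last (c : Fin (m+1) → ZMod α) (hc : c ⟨0, Nat.succ_pos m⟩ = c ⟨0, Nat.succ_pos m⟩) :
    rCol c ⟨m, Nat.lt_succ_self m⟩ = 0 := by
  rw [rCol_apply, rev_last_eq, sub_self]

lemma rCol_rCol (c : Fin (m+1) → ZMod α) (hc : c ⟨m, Nat.lt_succ_self m⟩ = 0) :
    rCol (rCol c) = c := by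
  funext k
  rw [rCol_apply, rCol_apply, rCol_apply, Fin.rev_rev, rev_zero_eq, hc]
  ring

lemma flag_key (w : Equiv.Perm (Fin (m+1))) (c : Fin (m+1) → ZMod α)
    (hc : c ⟨m, Nat.lt_succ_self m⟩ = 0) :
    flagStat (rPerm w) (rCol c) + flagStat w c = α * m := by
  set d : ZMod α := c ⟨0, Nat.succ_pos m⟩ with hd
  set t : ZMod α → ℕ := fun x => if x.val < d.val then 1 else 0 with ht
  set A : Fin m → ℕ := fun i =>
    (if c (lo (m+1) i) = c (hi (m+1) i) ∧ w (hi (m+1) i) < w (lo (m+1) i) then α else 0)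
    + (if (c (lo (m+1) i)).val < (c (hi (m+1) i)).val then α else 0) with hA
  set B : Fin m → ℕ := fun i =>
    (if rCol c (lo (m+1) i) = rCol c (hi (m+1) i) ∧
        rPerm w (hi (m+1) i) < rPerm w (lo (m+1) i) then α else 0)
    + (if (rCol c (lo (m+1) i)).val < (rCol c (hi (m+1) i)).val then α else 0) with hB
  have hBrev : ∀ i : Fin m, B (Fin.rev i) + A i + α * t (c (hi (m+1) i))
      = α + α * t (c (lo (m+1) i)) := by
    intro i
    have hne : w (lo (m+1) i) ≠ w (hi (m+1) i) := by
      intro h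
      have := w.injective h
      have h1 : (lo (m+1) i).val = (hi (m+1) i).val := congrArg Fin.val this
      simp [lo, hi] at h1
    have hBval : B (Fin.rev i) =
        (if c (hi (m+1) i) - d = c (lo (m+1) i) - d ∧
            w (lo (m+1) i) < w (hi (m+1) i) then α else 0)
        + (if (c (hi (m+1) i) - d).val < (c (lo (m+1) i) - d).val then α else 0) := by
      rw [hB]
      simp only [rCol_apply, rPerm_apply, rev_lo_rev, rev_hi_rev, ← hd]
    rw [hBval, ht]
    exact point (c (lo (m+1) i)) (c (hi (m+1) i)) d _ _ hne
  have hsum : (∑ i : Fin m, B (Fin.rev i)) + (∑ i : Fin m, A i)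
      + α * (∑ i : Fin m, t (c (hi (m+1) i)))
      = α * m + α * (∑ i : Fin m, t (c (lo (m+1) i))) := by
    calc (∑ i : Fin m, B (Fin.rev i)) + (∑ i : Fin m, A i)
        + α * (∑ i : Fin m, t (c (hi (m+1) i)))
        = ∑ i : Fin m, (B (Fin.rev i) + A i + α * t (c (hi (m+1) i))) := by
          rw [Finset.mul_sum, ← Finset.sum_add_distrib, ← Finset.sum_add_distrib]
      _ = ∑ i : Fin m, (α + α * t (c (lo (m+1) i))) :=
          Finset.sum_congr rfl (fun i _ => hBrev i)
      _ = α * m + α * (∑ i : Fin m, t (c (lo (m+1) i))) := by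
          rw [Finset.sum_add_distrib, Finset.sum_const, Finset.card_univ, Fintype.card_fin,
            smul_eq_mul, Finset.mul_sum, mul_comm m α]
  have hBsum : (∑ i : Fin m, B (Fin.rev i)) = ∑ i : Fin m, B i := by
    have := Equiv.sum_comp (Fin.revPerm : Equiv.Perm (Fin m)) B
    simpa [Fin.revPerm_apply] using this
  have htel : (∑ i : Fin m, t (c (hi (m+1) i)))
      = (∑ i : Fin m, t (c (lo (m+1) i))) + t (c ⟨m, Nat.lt_succ_self m⟩) := by
    have h1 : ∑ k : Fin (m+1), t (c k) = t (c 0) + ∑ i : Fin m, t (c i.succ) :=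
      Fin.sum_univ_succ _
    have h2 : ∑ k : Fin (m+1), t (c k)
        = (∑ i : Fin m, t (c i.castSucc)) + t (c (Fin.last m)) :=
      Fin.sum_univ_castSucc _
    have hlo : ∀ i : Fin m, lo (m+1) i = i.castSucc := fun i => rfl
    have hhi : ∀ i : Fin m, hi (m+1) i = i.succ := fun i => rfl
    have hz : (0 : Fin (m+1)) = ⟨0, Nat.succ_pos m⟩ := rfl
    have hlast : Fin.last m = ⟨m, Nat.lt_succ_self m⟩ := rfl
    have htd : t (c ⟨0, Nat.succ_pos m⟩) = 0 := if_neg (lt_irrefl d.val)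
    rw [hz, htd] at h1
    rw [hlast] at h2
    simp only [hlo, hhi]
    omega
  have hT : t (c ⟨m, Nat.lt_succ_self m⟩) = if 0 < d.val then 1 else 0 := by
    rw [hc, ht]
    simp [ZMod.val_zero]
  -- cancel
  have hS : (∑ i : Fin m, B i) + (∑ i : Fin m, A i) + α * (if 0 < d.val then 1 else 0)
      = α * m := by
    rw [← hT]
    have := hsum
    rw [hBsum, htel, Nat.mul_add] at this
    omega
  have hflag1 : flagStat w c = (∑ i : Fin m, A i) + d.val := flagStat_eq w c
  have hflag2 : flagStat (rPerm w) (rCol c) = (∑ i : Fin m, B i) + (rCol c ⟨0, Nat.succ_pos m⟩).val :=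
    flagStat_eq (rPerm w) (rCol c)
  have hneg : rCol c ⟨0, Nat.succ_pos m⟩ = -d := by
    rw [rCol_apply, rev_zero_eq, hc, zero_sub]
  rw [hflag1, hflag2, hneg, ZMod.neg_val]
  have hdv := d.val_lt
  by_cases h0 : d = 0
  · have hval0 : d.val = 0 := by rw [h0, ZMod.val_zero]
    rw [if_pos h0]
    rw [if_neg (by omega : ¬ 0 < d.val)] at hS
    omega
  · have hv : d.val ≠ 0 := fun h => h0 ((ZMod.val_eq_zero d).mp h)
    rw [if_pos (by omega : 0 < d.val)] at hS
    rw [if_neg h0]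
    omega

lemma flag_le (w : Equiv.Perm (Fin (m+1))) (c : Fin (m+1) → ZMod α)
    (hc : c ⟨m, Nat.lt_succ_self m⟩ = 0) : flagStat w c ≤ α * m := by
  have := flag_key w c hc
  omega

end Main

/-- The flag descent polynomial over colored permutations with last color `0` is palindromic:
`x^{α(n-1)} ⬝ F(1/x) = F(x)`. -/
theorem flag_descent_polynomial_palindromic (n α : ℕ) (hn : 0 < n) (hα : 0 < α) [NeZero α] :
    ∀ x : ℚ, x ≠ 0 →
      x ^ (α * (n - 1)) *
        (∑ w : Equiv.Perm (Fin n),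
          ∑ c ∈ univ.filter (fun c : Fin n → ZMod α => c ⟨n - 1, by omega⟩ = 0),
            (X : Polynomial ℚ) ^ flagStat w c).eval x⁻¹
      = (∑ w : Equiv.Perm (Fin n),
          ∑ c ∈ univ.filter (fun c : Fin n → ZMod α => c ⟨n - 1, by omega⟩ = 0),
            (X : Polynomial ℚ) ^ flagStat w c).eval x := by
  obtain ⟨m, rfl⟩ : ∃ m, n = m + 1 := ⟨n - 1, by omega⟩
  intro x hx
  simp only [Polynomial.eval_finset_sum, Polynomial.eval_pow, Polynomial.eval_X]
  have hmem : ∀ c : Fin (m+1) → ZMod α,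
      (c ∈ univ.filter (fun c : Fin (m+1) → ZMod α => c ⟨m + 1 - 1, by omega⟩ = 0))
      ↔ c ⟨m, Nat.lt_succ_self m⟩ = 0 := by
    intro c
    rw [Finset.mem_filter]
    constructor
    · exact fun h => h.2
    · exact fun h => ⟨Finset.mem_univ c, h⟩
  have step1 : x ^ (α * (m + 1 - 1)) *
      ∑ w : Equiv.Perm (Fin (m+1)),
        ∑ c ∈ univ.filter (fun c : Fin (m+1) → ZMod α => c ⟨m + 1 - 1, by omega⟩ = 0),
          x⁻¹ ^ flagStat w c
      = ∑ w : Equiv.Perm (Fin (m+1)),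
          ∑ c ∈ univ.filter (fun c : Fin (m+1) → ZMod α => c ⟨m + 1 - 1, by omega⟩ = 0),
            x ^ (α * m - flagStat w c) := by
    rw [Finset.mul_sum]
    refine Finset.sum_congr rfl fun w _ => ?_
    rw [Finset.mul_sum]
    refine Finset.sum_congr rfl fun c hc => ?_
    have hle : flagStat w c ≤ α * m := flag_le w c ((hmem c).mp hc)
    rw [pow_sub₀ x hx hle, ← inv_pow]
    norm_num
  rw [step1]
  rw [← Finset.sum_product', ← Finset.sum_product']
  refine Finset.sum_nbij' (fun p => (rPerm p.1, rCol p.2)) (fun p => (rPerm p.1, rCol p.2))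
    ?_ ?_ ?_ ?_ ?_
  · rintro ⟨w, c⟩ hp
    rw [Finset.mem_product] at hp ⊢
    exact ⟨Finset.mem_univ _, (hmem _).mpr (rCol_last c rfl)⟩
  · rintro ⟨w, c⟩ hp
    rw [Finset.mem_product] at hp ⊢
    exact ⟨Finset.mem_univ _, (hmem _).mpr (rCol_last c rfl)⟩
  · rintro ⟨w, c⟩ hp
    rw [Finset.mem_product] at hp
    have hc := (hmem c).mp hp.2
    simp [rPerm_rPerm, rCol_rCol c hc]
  · rintro ⟨w, c⟩ hp
    rw [Finset.mem_product] at hp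
    have hc := (hmem c).mp hp.2
    simp [rPerm_rPerm, rCol_rCol c hc]
  · rintro ⟨w, c⟩ hp
    rw [Finset.mem_product] at hp
    have hc := (hmem c).mp hp.2
    have hkey := flag_key w c hc
    dsimp only
    congr 1
    omega
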